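/- Let Q : ℝ → ℝ, let ω_H and ω_∞ be real numbers, let A, B, C, D ∈ ℂ, and let φ : ℝ → ℂ be twice differentiable with φ''(x) = Q(x)·φ(x) for all x ∈ ℝ. Suppose that as x → −∞ one has φ(x) − (A·e^{iω_H x} + B·e^{−iω_H x}) → 0 and φ'(x) − iω_H·(A·e^{iω_H x} − B·e^{−iω_H x}) → 0, and that as x → +∞ one has φ(x) − (C·e^{iω_∞ x} + D·e^{−iω_∞ x}) → 0 and φ'(x) − iω_∞·(C·e^{iω_∞ x} − D·e^{−iω_∞ x}) → 0. Then ω_∞·(‖C‖² − ‖D‖²) = ω_H·(‖A‖² − ‖B‖²). -/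

import Mathlib

/-!
For a real potential `Q`, the flux `Im(conj φ · φ')` has derivative `Im(|φ'|² + Q |φ|²) = 0`,
so it is constant. Since `φ, φ'` approach bounded plane waves, the flux at `∓∞` converges to the
flux of `A e^{iωx} + B e^{-iωx}`, which is exactly `ω (|A|² - |B|²)`: the cross terms
`conj B · A · e^{2iωx}` and its conjugate cancel in the imaginary part.
-/

open Filter Topology Complex ComplexConjugate

noncomputable def planeWave (ω : ℝ) (A B : ℂ) (x : ℝ) : ℂ :=
  A * exp (I * ω * x) + B * exp (-(I * ω * x))

noncomputable def planeWaveDeriv (ω : ℝ) (A B : ℂ) (x : ℝ) : ℂ :=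
  I * ω * (A * exp (I * ω * x) - B * exp (-(I * ω * x)))

noncomputable def flux (φ φ' : ℝ → ℂ) (x : ℝ) : ℝ :=
  (conj (φ x) * φ' x).im

theorem norm_exp_I_mul_ofReal_mul (ω x : ℝ) : ‖exp (I * ω * x)‖ = 1 := by
  simpa [mul_assoc] using norm_exp_I_mul_ofReal (ω * x)

theorem norm_exp_neg_I_mul_ofReal_mul (ω x : ℝ) : ‖exp (-(I * ω * x))‖ = 1 := by
  simpa [mul_assoc] using norm_exp_I_mul_ofReal (-(ω * x))

theorem norm_planeWave_le (ω : ℝ) (A B : ℂ) (x : ℝ) : ‖planeWave ω A B x‖ ≤ ‖A‖ + ‖B‖ := by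
  calc ‖planeWave ω A B x‖ ≤ ‖A * exp (I * ω * x)‖ + ‖B * exp (-(I * ω * x))‖ := norm_add_le _ _
    _ = ‖A‖ + ‖B‖ := by
      rw [norm_mul, norm_mul, norm_exp_I_mul_ofReal_mul, norm_exp_neg_I_mul_ofReal_mul,
        mul_one, mul_one]

theorem norm_planeWaveDeriv_le (ω : ℝ) (A B : ℂ) (x : ℝ) :
    ‖planeWaveDeriv ω A B x‖ ≤ |ω| * (‖A‖ + ‖B‖) := by
  rw [planeWaveDeriv, norm_mul, norm_mul, norm_I, one_mul, norm_real, Real.norm_eq_abs]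
  gcongr
  calc ‖A * exp (I * ω * x) - B * exp (-(I * ω * x))‖
      ≤ ‖A * exp (I * ω * x)‖ + ‖B * exp (-(I * ω * x))‖ := norm_sub_le _ _
    _ = ‖A‖ + ‖B‖ := by
      rw [norm_mul, norm_mul, norm_exp_I_mul_ofReal_mul, norm_exp_neg_I_mul_ofReal_mul,
        mul_one, mul_one]

theorem flux_planeWave (ω : ℝ) (A B : ℂ) (x : ℝ) :
    flux (planeWave ω A B) (planeWaveDeriv ω A B) x = ω * (‖A‖ ^ 2 - ‖B‖ ^ 2) := by
  have hpos : I * ω * x = ((ω * x : ℝ) : ℂ) * I := by push_cast; ring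
  have hneg : -(I * ω * x) = ((-(ω * x) : ℝ) : ℂ) * I := by push_cast; ring
  rw [flux, planeWave, planeWaveDeriv, hneg, hpos, exp_mul_I, exp_mul_I]
  simp only [Complex.sq_norm, normSq_apply, ← ofReal_cos, ← ofReal_sin,
    Real.cos_neg, Real.sin_neg]
  simp only [add_im, mul_im, mul_re, I_re, I_im, ofReal_re, ofReal_im, conj_re, conj_im,
    sub_re, sub_im, add_re, map_add, map_mul]
  linear_combination
    (ω * (A.re ^ 2 + A.im ^ 2 - B.re ^ 2 - B.im ^ 2)) * Real.sin_sq_add_cos_sq (ω * x)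

theorem hasDerivAt_flux (Q : ℝ → ℝ) {φ φ' : ℝ → ℂ} (hφ : ∀ x, HasDerivAt φ (φ' x) x)
    (hφ' : ∀ x, HasDerivAt φ' ((Q x : ℂ) * φ x) x) (x : ℝ) : HasDerivAt (flux φ φ') 0 x := by
  have hprod := (hφ x).star.mul (hφ' x)
  have hreal : (conj (φ' x) * φ' x + conj (φ x) * ((Q x : ℂ) * φ x)).im = 0 := by
    simp only [add_im, mul_im, conj_re, conj_im, ofReal_re, ofReal_im, mul_re]
    ring
  exact (imCLM.hasFDerivAt.comp_hasDerivAt x hprod).congr_deriv hreal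

theorem tendsto_star_mul_sub_star_mul {ι R : Type*} [NonUnitalNormedRing R] [StarRing R]
    [NormedStarGroup R] {l : Filter ι} {f g u v : ι → R}
    (hf : Tendsto (fun x => f x - g x) l (𝓝 0)) (hu : Tendsto (fun x => u x - v x) l (𝓝 0))
    (hg : IsBoundedUnder (· ≤ ·) l (norm ∘ g)) (hv : IsBoundedUnder (· ≤ ·) l (norm ∘ v)) :
    Tendsto (fun x => star (f x) * u x - star (g x) * v x) l (𝓝 0) := by
  have hf' : Tendsto (fun x => star (f x - g x)) l (𝓝 0) := by simpa using hf.star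
  have hg' : IsBoundedUnder (· ≤ ·) l (norm ∘ fun x => star (g x)) := by
    simpa [Function.comp_def] using hg
  -- `f* u - g* v = (f - g)* (u - v) + (f - g)* v + g* (u - v)`
  have hsum := ((hf'.mul hu).add (hf'.zero_mul_isBoundedUnder_le hv)).add
    (isBoundedUnder_le_mul_tendsto_zero hg' hu)
  simp only [add_zero, mul_zero] at hsum
  refine hsum.congr fun x => ?_
  simp only [star_sub]
  noncomm_ring

theorem tendsto_flux_of_tendsto_planeWave {l : Filter ℝ} (ω : ℝ) (A B : ℂ) {φ φ' : ℝ → ℂ}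
    (hφ : Tendsto (fun x => φ x - planeWave ω A B x) l (𝓝 0))
    (hφ' : Tendsto (fun x => φ' x - planeWaveDeriv ω A B x) l (𝓝 0)) :
    Tendsto (flux φ φ') l (𝓝 (ω * (‖A‖ ^ 2 - ‖B‖ ^ 2))) := by
  have hbound : IsBoundedUnder (· ≤ ·) l (norm ∘ planeWave ω A B) :=
    isBoundedUnder_of ⟨_, norm_planeWave_le ω A B⟩
  have hbound' : IsBoundedUnder (· ≤ ·) l (norm ∘ planeWaveDeriv ω A B) :=
    isBoundedUnder_of ⟨_, norm_planeWaveDeriv_le ω A B⟩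
  have hlim := (continuous_im.tendsto 0).comp (tendsto_star_mul_sub_star_mul hφ hφ' hbound hbound')
  rw [← tendsto_sub_nhds_zero_iff]
  simp only [Function.comp_def, zero_im] at hlim
  refine hlim.congr fun x => ?_
  simp [flux, ← flux_planeWave ω A B x]

/-- The Wronskian flux relation for scattering off a real potential:
if `φ'' = Q·φ` with `Q` real-valued, `φ ~ A·e^{iω_H x} + B·e^{−iω_H x}` as
`x → −∞` and `φ ~ C·e^{iω_∞ x} + D·e^{−iω_∞ x}` as `x → +∞` (with matching
derivatives), then `ω_∞·(‖C‖² − ‖D‖²) = ω_H·(‖A‖² − ‖B‖²)`. -/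
theorem scattering_flux_relation (Q : ℝ → ℝ) (ωH ωI : ℝ) (A B C D : ℂ)
    (φ φ' : ℝ → ℂ)
    (hφ : ∀ x : ℝ, HasDerivAt φ (φ' x) x)
    (hφ' : ∀ x : ℝ, HasDerivAt φ' ((Q x : ℂ) * φ x) x)
    (h₁ : Tendsto (fun x : ℝ =>
        φ x - (A * Complex.exp (Complex.I * ωH * x)
          + B * Complex.exp (-(Complex.I * ωH * x)))) atBot (nhds 0))
    (h₂ : Tendsto (fun x : ℝ =>
        φ' x - Complex.I * ωH * (A * Complex.exp (Complex.I * ωH * x)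
          - B * Complex.exp (-(Complex.I * ωH * x)))) atBot (nhds 0))
    (h₃ : Tendsto (fun x : ℝ =>
        φ x - (C * Complex.exp (Complex.I * ωI * x)
          + D * Complex.exp (-(Complex.I * ωI * x)))) atTop (nhds 0))
    (h₄ : Tendsto (fun x : ℝ =>
        φ' x - Complex.I * ωI * (C * Complex.exp (Complex.I * ωI * x)
          - D * Complex.exp (-(Complex.I * ωI * x)))) atTop (nhds 0)) :
    ωI * (‖C‖ ^ 2 - ‖D‖ ^ 2) = ωH * (‖A‖ ^ 2 - ‖B‖ ^ 2) := by
  have hderiv := hasDerivAt_flux Q hφ hφ'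
  have hconst : flux φ φ' = fun _ => flux φ φ' 0 := funext fun x =>
    is_const_of_deriv_eq_zero (fun y => (hderiv y).differentiableAt)
      (fun y => (hderiv y).deriv) x 0
  have hTop := tendsto_flux_of_tendsto_planeWave ωI C D h₃ h₄
  have hBot := tendsto_flux_of_tendsto_planeWave ωH A B h₁ h₂
  rw [hconst] at hTop hBot
  exact (tendsto_nhds_unique hTop tendsto_const_nhds).trans
    (tendsto_nhds_unique tendsto_const_nhds hBot)
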